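/- Let V be an N×N complex matrix and let S be an N×N complex positive semidefinite matrix with S_{ii} = 1 for all i. Then P(V,S) ≤ Σ_{π ∈ S_N} |perm(V_π ∘ conj(V))| · ∏_{i=1}^N |S_{i,π(i)}|, where (V_π)_{r,j} := V_{π(r),j} and ∘ is the entrywise (Hadamard) product; equivalently, P(V,S) ≤ perm(V ∘ conj(V)) + Σ_{π ≠ id} |perm(V_π ∘ conj(V))| · J_π(S) with J_π(S) := ∏_{i=1}^N |S_{i,π(i)}|. -/

import Mathlib

open Matrix Finset
open scoped ComplexOrder

/-- The permanent of a complex square matrix. -/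
noncomputable def perm {N : ℕ} (M : Matrix (Fin N) (Fin N) ℂ) : ℂ :=
  ∑ τ : Equiv.Perm (Fin N), ∏ i, M i (τ i)

/-- The partially distinguishable boson-sampling transition probability. -/
noncomputable def P {N : ℕ} (V S : Matrix (Fin N) (Fin N) ℂ) : ℂ :=
  ∑ α : Equiv.Perm (Fin N), ∑ ρ : Equiv.Perm (Fin N),
    ∏ j, V (α j) j * (starRingEnd ℂ) (V (ρ j) j) * S (ρ j) (α j)

/-!
Substituting `α = π ρ` in the double sum defining `P V S` separates the two permutations:
the factor `∏ i, S i (π i)` depends on `π` alone, and the sum over `ρ` of the remaining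
product is the permanent of `V_π ∘ conj V`. Hence `P V S` is a sum over `π` of these
permanents weighted by `∏ i, S i (π i)`, and the triangle inequality bounds `‖P V S‖`.
For Hermitian `S` the value `P V S` is real, so it is at most its norm.
-/

lemma perm_eq_permanent {N : ℕ} (M : Matrix (Fin N) (Fin N) ℂ) : perm M = M.permanent :=
  M.permanent_transpose

lemma P_eq_sum_perm_mul_prod {N : ℕ} (V S : Matrix (Fin N) (Fin N) ℂ) :
    P V S = ∑ π : Equiv.Perm (Fin N),
      perm (V.submatrix π id ⊙ V.map (starRingEnd ℂ)) * ∏ i, S i (π i) := by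
  calc P V S = ∑ ρ : Equiv.Perm (Fin N), ∑ π : Equiv.Perm (Fin N),
        (∏ j, (V.submatrix π id ⊙ V.map (starRingEnd ℂ)) (ρ j) j) * ∏ i, S i (π i) := by
        rw [P, sum_comm]
        refine sum_congr rfl fun ρ _ => ?_
        rw [← Equiv.sum_comp (Equiv.mulRight ρ)]
        refine sum_congr rfl fun π _ => ?_
        rw [← Equiv.prod_comp ρ fun i => S i (π i), ← prod_mul_distrib]
        rfl
    _ = _ := by
        rw [sum_comm]
        simp_rw [perm_eq_permanent, permanent, sum_mul]

lemma norm_P_le {N : ℕ} (V S : Matrix (Fin N) (Fin N) ℂ) :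
    ‖P V S‖ ≤ ∑ π : Equiv.Perm (Fin N),
      ‖perm (V.submatrix π id ⊙ V.map (starRingEnd ℂ))‖ * ∏ i, ‖S i (π i)‖ := by
  rw [P_eq_sum_perm_mul_prod]
  refine (norm_sum_le _ _).trans_eq (sum_congr rfl fun π _ => ?_)
  rw [norm_mul, norm_prod]

lemma conj_P {N : ℕ} (V : Matrix (Fin N) (Fin N) ℂ) {S : Matrix (Fin N) (Fin N) ℂ}
    (hS : S.IsHermitian) : starRingEnd ℂ (P V S) = P V S := by
  simp_rw [P, map_sum, map_prod, _root_.map_mul, Complex.conj_conj]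
  rw [sum_comm]
  refine sum_congr rfl fun α _ => sum_congr rfl fun ρ _ => prod_congr rfl fun j _ => ?_
  rw [starRingEnd_apply (S _ _), hS.apply]
  ring

theorem transition_prob_le_interference_bound_general (N : ℕ)
    (V S : Matrix (Fin N) (Fin N) ℂ)
    (hS : S.PosSemidef) :
    P V S ≤ ((∑ π : Equiv.Perm (Fin N),
      ‖perm (Matrix.of fun r j => V (π r) j * (starRingEnd ℂ) (V r j))‖ *
        ∏ i, ‖S i (π i)‖ : ℝ) : ℂ) := by
  calc P V S = ((P V S).re : ℂ) := (Complex.conj_eq_iff_re.mp (conj_P V hS.isHermitian)).symm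
    _ ≤ (‖P V S‖ : ℂ) := by exact_mod_cast Complex.re_le_norm _
    _ ≤ _ := by exact_mod_cast norm_P_le V S

/-- upper bound on the transition probability by the sum over
permutations of `|perm(V_π ∘ conj V)| · ∏_i |S i (π i)|`. -/
theorem transition_prob_le_interference_bound (N : ℕ)
    (V S : Matrix (Fin N) (Fin N) ℂ)
    (hS : S.PosSemidef) (hS1 : ∀ i, S i i = 1) :
    P V S ≤ ((∑ π : Equiv.Perm (Fin N),
      ‖perm (Matrix.of fun r j => V (π r) j * (starRingEnd ℂ) (V r j))‖ *
        ∏ i, ‖S i (π i)‖ : ℝ) : ℂ) :=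
  transition_prob_le_interference_bound_general N V S hS
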